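/- For words u, v, a subset I of positions of u, and a subset J of positions of v inside u*v, one has pack((u*v)[I ∪ J']) = pack(u[I]) * pack(v[J]), where J' is J shifted by |u|. -/

import Mathlib

/-- Renaming map for packing: sends letter `i` to the number of distinct
nonzero letters of `w` that are `≤ i` (so `0 ↦ 0`). -/
def packFun (w : List ℕ) (i : ℕ) : ℕ :=
  (w.toFinset.filter (fun j => j ≠ 0 ∧ j ≤ i)).card

/-- The pack operator: order-preserving relabeling of the nonzero letters onto `{1,…,k}`. -/
def pack (w : List ℕ) : List ℕ := w.map (packFun w)

/-- `wsup w` is the maximum letter of `w` (`0` for the empty word). -/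
def wsup (w : List ℕ) : ℕ := w.foldr max 0

/-- `shiftT t w` replaces each nonzero letter `n` of `w` by `n + t`, fixing `0`. -/
def shiftT (t : ℕ) (w : List ℕ) : List ℕ := w.map fun n => if n = 0 then 0 else n + t

/-- Shifted concatenation `u * v = u · T_{sup u}(v)`. -/
def sconcat (u v : List ℕ) : List ℕ := u ++ shiftT (wsup u) v

/-- `w[I]`: the subword of `w` keeping the letters at positions in `I` (0-indexed), in order. -/
def subword (w : List ℕ) (I : Finset ℕ) : List ℕ :=
  ((List.range w.length).filter fun i => decide (i ∈ I)).map fun i => w.getD i 0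

/-!
Taking a subword commutes with concatenation and with renaming letters, so the left-hand side is
`pack (u[I] ++ T_t (v[J]))` with `t = sup u ≥ sup u[I]`. Every nonzero letter of the shifted block
exceeds every letter of `u[I]`, so packing the concatenation packs `u[I]` unchanged and sends a
nonzero letter `n + t` of the block to the number of distinct nonzero letters of `u[I]` (which is
`sup (pack u[I])`) plus the rank of `n` in `v[J]`.
-/

def letters (w : List ℕ) : Finset ℕ := w.toFinset.filter (· ≠ 0)

def alphabetSize (w : List ℕ) : ℕ := (letters w).card

lemma packFun_eq_card (w : List ℕ) (i : ℕ) :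
    packFun w i = ((letters w).filter (· ≤ i)).card := by
  rw [letters, Finset.filter_filter]
  rfl

lemma letters_append (x y : List ℕ) : letters (x ++ y) = letters x ∪ letters y := by
  rw [letters, List.toFinset_append, Finset.filter_union]
  rfl

lemma letters_shiftT (t : ℕ) (y : List ℕ) :
    letters (shiftT t y) = (letters y).map (addRightEmbedding t) := by
  ext a
  simp only [letters, shiftT, Finset.mem_filter, List.mem_toFinset, List.mem_map,
    Finset.mem_map, addRightEmbedding_apply]
  constructor
  · rintro ⟨⟨n, hn, rfl⟩, h0⟩
    have hn0 : n ≠ 0 := by rintro rfl; simp at h0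
    exact ⟨n, ⟨hn, hn0⟩, by simp [hn0]⟩
  · rintro ⟨n, ⟨hn, hn0⟩, rfl⟩
    exact ⟨⟨n, hn, by simp [hn0]⟩, by omega⟩

lemma wsup_le_iff {w : List ℕ} {c : ℕ} : wsup w ≤ c ↔ ∀ a ∈ w, a ≤ c := by
  induction w with
  | nil => simp [wsup]
  | cons b l ih => simp [wsup, ← ih]

lemma le_wsup {a : ℕ} {w : List ℕ} (h : a ∈ w) : a ≤ wsup w :=
  wsup_le_iff.1 le_rfl a h

lemma wsup_map_of_monotone {f : ℕ → ℕ} (hf : Monotone f) (h0 : f 0 = 0) (w : List ℕ) :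
    wsup (w.map f) = f (wsup w) := by
  induction w with
  | nil => exact h0.symm
  | cons b l ih =>
    change max (f b) (wsup (l.map f)) = f (max b (wsup l))
    rw [ih, hf.map_max]

lemma packFun_monotone (w : List ℕ) : Monotone (packFun w) := fun _ _ hij =>
  Finset.card_le_card <|
    Finset.monotone_filter_right _ fun _ _ ⟨h0, hi⟩ => ⟨h0, hi.trans hij⟩

lemma packFun_zero (w : List ℕ) : packFun w 0 = 0 := by
  simp [packFun_eq_card, letters]

lemma packFun_ne_zero {w : List ℕ} {n : ℕ} (hn : n ∈ w) (h0 : n ≠ 0) :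
    packFun w n ≠ 0 := by
  rw [packFun_eq_card]
  exact (Finset.card_pos.2 ⟨n, by simp [letters, hn, h0]⟩).ne'

lemma packFun_of_wsup_le {w : List ℕ} {i : ℕ} (h : wsup w ≤ i) :
    packFun w i = alphabetSize w := by
  rw [packFun_eq_card, alphabetSize, Finset.filter_true_of_mem]
  intro a ha
  exact (le_wsup (List.mem_toFinset.1 (Finset.mem_filter.1 ha).1)).trans h

lemma wsup_pack (w : List ℕ) : wsup (pack w) = alphabetSize w := by
  rw [pack, wsup_map_of_monotone (packFun_monotone w) (packFun_zero w),
    packFun_of_wsup_le le_rfl]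

lemma packFun_append_of_disjoint {x y : List ℕ} (h : Disjoint (letters x) (letters y))
    (i : ℕ) :
    packFun (x ++ y) i = packFun x i + packFun y i := by
  simp only [packFun_eq_card, letters_append, Finset.filter_union]
  exact Finset.card_union_of_disjoint (Finset.disjoint_filter_filter h)

lemma packFun_shiftT_of_le {t i : ℕ} (y : List ℕ) (hi : i ≤ t) :
    packFun (shiftT t y) i = 0 := by
  rw [packFun_eq_card, letters_shiftT, Finset.card_eq_zero, Finset.filter_eq_empty_iff]
  simp only [Finset.mem_map, addRightEmbedding_apply, letters, Finset.mem_filter]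
  rintro _ ⟨n, ⟨_, hn0⟩, rfl⟩
  omega

lemma packFun_shiftT_add (t n : ℕ) (y : List ℕ) :
    packFun (shiftT t y) (n + t) = packFun y n := by
  rw [packFun_eq_card, packFun_eq_card, letters_shiftT, Finset.filter_map, Finset.card_map]
  congr 2
  ext m
  simp

lemma disjoint_letters_shiftT {x : List ℕ} {t : ℕ} (hx : wsup x ≤ t) (y : List ℕ) :
    Disjoint (letters x) (letters (shiftT t y)) := by
  rw [letters_shiftT, Finset.disjoint_left]
  simp only [Finset.mem_map, addRightEmbedding_apply, letters, Finset.mem_filter,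
    List.mem_toFinset]
  rintro _ ⟨ha, _⟩ ⟨n, ⟨_, hn0⟩, rfl⟩
  have := (le_wsup ha).trans hx
  omega

lemma pack_append_shiftT {x : List ℕ} {t : ℕ} (hx : wsup x ≤ t) (y : List ℕ) :
    pack (x ++ shiftT t y) = pack x ++ shiftT (alphabetSize x) (pack y) := by
  have hsplit := packFun_append_of_disjoint (disjoint_letters_shiftT hx y)
  rw [pack, List.map_append]
  congr 1
  · refine List.map_congr_left fun a ha => ?_
    rw [hsplit, packFun_shiftT_of_le y ((le_wsup ha).trans hx), add_zero]
  · simp only [pack, shiftT, List.map_map]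
    refine List.map_congr_left fun n hn => ?_
    by_cases h0 : n = 0
    · simp [h0, packFun_zero]
    · simp only [Function.comp_apply, if_neg h0, if_neg (packFun_ne_zero hn h0)]
      rw [← shiftT, hsplit, packFun_shiftT_add,
        packFun_of_wsup_le (hx.trans (Nat.le_add_left t n)), add_comm]

lemma lt_of_mem_filter_range {n i : ℕ} {p : ℕ → Bool} (h : i ∈ (List.range n).filter p) :
    i < n :=
  List.mem_range.1 (List.mem_of_mem_filter h)

lemma subword_map (f : ℕ → ℕ) (w : List ℕ) (J : Finset ℕ) :
    subword (w.map f) J = (subword w J).map f := by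
  rw [subword, subword, List.length_map, List.map_map]
  refine List.map_congr_left fun i hi => ?_
  have hi' := lt_of_mem_filter_range hi
  simp [hi']

lemma mem_of_mem_subword {a : ℕ} {w : List ℕ} {I : Finset ℕ} (h : a ∈ subword w I) :
    a ∈ w := by
  obtain ⟨i, hi, rfl⟩ := List.mem_map.1 h
  have hi' := lt_of_mem_filter_range hi
  simp [hi']

lemma wsup_subword_le (w : List ℕ) (I : Finset ℕ) : wsup (subword w I) ≤ wsup w :=
  wsup_le_iff.2 fun _ ha => le_wsup (mem_of_mem_subword ha)

lemma subword_append {a : List ℕ} (b : List ℕ) {I : Finset ℕ}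
    (hI : I ⊆ Finset.range a.length) (J : Finset ℕ) :
    subword (a ++ b) (I ∪ J.image (· + a.length)) = subword a I ++ subword b J := by
  rw [subword, List.length_append, List.range_add, List.filter_append, List.map_append]
  congr 1
  · rw [List.filter_congr (q := fun i => decide (i ∈ I))]
    · refine List.map_congr_left fun i hi => ?_
      exact List.getD_append _ _ _ _ (lt_of_mem_filter_range hi)
    · intro i hi
      have := List.mem_range.1 hi
      simp only [decide_eq_decide, Finset.mem_union, Finset.mem_image]
      exact ⟨by rintro (h | ⟨j, -, rfl⟩) <;> [exact h; omega], Or.inl⟩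
  · rw [List.filter_map, List.map_map, List.filter_congr (q := fun i => decide (i ∈ J))]
    · refine List.map_congr_left fun i _ => ?_
      rw [Function.comp_apply, List.getD_append_right _ _ _ _ (Nat.le_add_right _ _),
        Nat.add_sub_cancel_left]
    · intro i _
      have : i + a.length ∉ I := fun h => by simpa using hI h
      simp [this, add_comm a.length i]

theorem pack_subword_sconcat_general (u v : List ℕ) (I J : Finset ℕ)
    (hI : I ⊆ Finset.range u.length) :
    pack (subword (sconcat u v) (I ∪ J.image (· + u.length)))
      = sconcat (pack (subword u I)) (pack (subword v J)) := by
  rw [sconcat, subword_append _ hI, shiftT, subword_map, ← shiftT,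
    pack_append_shiftT (wsup_subword_le u I), sconcat, wsup_pack]

/-- `pack((u*v)[I ∪ J']) = pack(u[I]) * pack(v[J])` where `J'` is `J` shifted by `|u|`. -/
theorem pack_subword_sconcat (u v : List ℕ) (I J : Finset ℕ)
    (hI : I ⊆ Finset.range u.length) (hJ : J ⊆ Finset.range v.length) :
    pack (subword (sconcat u v) (I ∪ J.image (· + u.length)))
      = sconcat (pack (subword u I)) (pack (subword v J)) :=
  pack_subword_sconcat_general u v I J hI
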